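/- arXiv:2402.05324 — 2 statements merged into one kernel-verified Lean document; each statement's English description precedes it below -/
import Mathlib

section
/- Let φ be an admissible function with upper exponent β. Then for every real number x and every q₀ with 1 ≤ q₀ < ∞: if x ≥ 0 then inf_{q ∈ [q₀,∞)} φ(q)e^{−x/q} ≤ φ(q₀)e^{−x/q₀}, and if x < 0 then inf_{q ∈ [q₀,∞)} φ(q)e^{−x/q} ≤ q₀^β e^{1/q₀} φ(1 − x). -/
open MeasureTheory Set ENNReal

/-- The decreasing rearrangement of `f` with respect to the measure `μ`:
`f*_μ(t) = inf {y > 0 : μ({x : |f x| > y}) ≤ t}`. -/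
noncomputable def rearr {α : Type*} [MeasurableSpace α] (μ : Measure α)
    (f : α → ℝ) (t : ℝ) : ℝ :=
  sInf {y : ℝ | 0 < y ∧ μ {x | y < |f x|} ≤ ENNReal.ofReal t}

/-- `T` is sublinear: `|T(f+g)| ≤ |Tf| + |Tg|` and `|T(cf)| = |c||Tf|`, `ν`-a.e. -/
def Sublinear {α β : Type*} [MeasurableSpace β] (ν : Measure β)
    (T : (α → ℝ) → (β → ℝ)) : Prop :=
  (∀ f g : α → ℝ, ∀ᵐ x ∂ν, |T (f + g) x| ≤ |T f x| + |T g x|) ∧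
  (∀ (c : ℝ) (f : α → ℝ), ∀ᵐ x ∂ν, |T (c • f) x| = |c| * |T f x|)

/-- `φ : [1,∞) → [1,∞)` is admissible with exponents `γ, β`:
`φ(1) = 1`, `φ ≥ 1`, `φ` is log-concave and differentiable on `[1,∞)`, and
`γ/x ≤ φ'(x)/φ(x) ≤ β/x` for all `x ≥ 1`. -/
structure IsAdmissible (φ : ℝ → ℝ) (γ β : ℝ) : Prop where
  one : φ 1 = 1
  ge_one : ∀ x : ℝ, 1 ≤ x → 1 ≤ φ x
  logConcave : ∀ x y θ : ℝ, 1 ≤ x → 1 ≤ y → 0 ≤ θ → θ ≤ 1 →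
    θ * Real.log (φ x) + (1 - θ) * Real.log (φ y) ≤
      Real.log (φ (θ * x + (1 - θ) * y))
  gamma_pos : 0 < γ
  beta_pos : 0 < β
  deriv_bound : ∃ D : ℝ → ℝ, ∀ x : ℝ, 1 ≤ x →
    HasDerivWithinAt φ (D x) (Set.Ici 1) x ∧
      γ / x ≤ D x / φ x ∧ D x / φ x ≤ β / x

/-- The Lorentz norm `‖f‖_{L^{p,1}(μ)} = ∫₀^∞ t^{1/p−1} f*_μ(t) dt`. -/
noncomputable def lorentz1 {α : Type*} [MeasurableSpace α] (μ : Measure α)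
    (p : ℝ) (f : α → ℝ) : ℝ≥0∞ :=
  ∫⁻ t in Set.Ioi (0:ℝ), ENNReal.ofReal (t ^ (1/p - 1) * rearr μ f t)

/-- The Lorentz norm `‖f‖_{L^{p,∞}(μ)} = sup_{t>0} t^{1/p} f*_μ(t)`. -/
noncomputable def lorentzInf {α : Type*} [MeasurableSpace α] (μ : Measure α)
    (p : ℝ) (f : α → ℝ) : ℝ≥0∞ :=
  ⨆ t ∈ Set.Ioi (0:ℝ), ENNReal.ofReal (t ^ (1/p) * rearr μ f t)

/-- The Calderón-type operator `R_{p₀,p₁,φ}` written in terms of the reciprocal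
exponents `a = 1/p₀`, `b = 1/p₁`:
`R f(t) = t^{-a} ∫₀^t φ(1 − log(s/t)) f(s) s^{a−1} ds + t^{-b} ∫_t^∞ f(s) s^{b−1} ds`. -/
noncomputable def calderonR (a b : ℝ) (φ : ℝ → ℝ) (f : ℝ → ℝ≥0∞) (t : ℝ) : ℝ≥0∞ :=
  ENNReal.ofReal (t ^ (-a)) * ∫⁻ s in Set.Ioo (0:ℝ) t,
      ENNReal.ofReal (φ (1 - Real.log (s / t)) * s ^ (a - 1)) * f s +
  ENNReal.ofReal (t ^ (-b)) * ∫⁻ s in Set.Ioi t,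
      ENNReal.ofReal (s ^ (b - 1)) * f s

/-- Iterated logarithms: `logk 1 x = 1 + log⁺ x`, `logk (k+1) x = logk 1 (logk k x)`. -/
noncomputable def logk : ℕ → ℝ → ℝ
  | 0, x => x
  | n + 1, x => 1 + max (Real.log (logk n x)) 0

/-!
For `x ≥ 0` take `q = q₀`. For `x < 0` take `q = q₀ (1 - x)`: the bound `φ' / φ ≤ β / t` makes
`log φ(t) - β log t` nonincreasing, so `φ(q₀ (1 - x)) ≤ q₀ ^ β φ(1 - x)`, while
`-x / (q₀ (1 - x)) ≤ 1 / q₀`.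
-/

theorem le_rpow_mul_of_logDeriv_le {f f' : ℝ → ℝ} {a β : ℝ} (ha : 0 < a)
    (hpos : ∀ x, a ≤ x → 0 < f x) (hf : ∀ x, a ≤ x → HasDerivWithinAt f (f' x) (Ici a) x)
    (hbound : ∀ x, a ≤ x → f' x / f x ≤ β / x) {c s : ℝ} (hc : 1 ≤ c) (hs : a ≤ s) :
    f (c * s) ≤ c ^ β * f s := by
  have hx_pos : ∀ x, a ≤ x → 0 < x := fun x hx => ha.trans_le hx
  set h : ℝ → ℝ := fun t => Real.log (f t) - β * Real.log t
  have hcont : ContinuousOn h (Ici a) :=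
    ((ContinuousOn.log (fun t ht => (hf t ht).continuousWithinAt) fun t ht => (hpos t ht).ne').sub
      ((continuousOn_id.log fun t ht => (hx_pos t ht).ne').const_smul β))
  have hanti : AntitoneOn h (Ici a) := by
    refine antitoneOn_of_hasDerivWithinAt_nonpos (convex_Ici a) hcont
      (f' := fun t => f' t / f t - β / t) (fun t ht => ?_) (fun t ht => ?_)
    · rw [interior_Ici] at ht ⊢
      have hta : a ≤ t := ht.le
      have hlogf := (Real.hasDerivAt_log (hpos t hta).ne').comp_hasDerivWithinAt t
        ((hf t hta).mono (Ioi_subset_Ici le_rfl))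
      have hlog := ((Real.hasDerivAt_log (hx_pos t hta).ne').hasDerivWithinAt
        (s := Ioi a)).const_mul β
      exact (hlogf.sub hlog).congr_deriv (by rw [div_eq_inv_mul, div_eq_mul_inv])
    · rw [interior_Ici] at ht
      exact sub_nonpos.2 (hbound t ht.le)
  have hcs : s ≤ c * s := le_mul_of_one_le_left (hx_pos s hs).le hc
  have hdec : h (c * s) ≤ h s := hanti hs (hs.trans hcs) hcs
  have hc_pos : 0 < c := one_pos.trans_le hc
  have hlog : Real.log (f (c * s)) ≤ β * Real.log c + Real.log (f s) := by
    simp only [h, Real.log_mul hc_pos.ne' (hx_pos s hs).ne'] at hdec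
    linarith
  calc f (c * s) = Real.exp (Real.log (f (c * s))) := (Real.exp_log (hpos _ (hs.trans hcs))).symm
    _ ≤ Real.exp (β * Real.log c + Real.log (f s)) := Real.exp_le_exp.2 hlog
    _ = c ^ β * f s := by
      rw [Real.exp_add, Real.exp_log (hpos s hs), Real.rpow_def_of_pos hc_pos, mul_comm β]

namespace IsAdmissible

variable {φ : ℝ → ℝ} {γ β : ℝ}

theorem pos (hφ : IsAdmissible φ γ β) {x : ℝ} (hx : 1 ≤ x) : 0 < φ x :=
  one_pos.trans_le (hφ.ge_one x hx)

theorem map_mul_le (hφ : IsAdmissible φ γ β) {c s : ℝ} (hc : 1 ≤ c) (hs : 1 ≤ s) :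
    φ (c * s) ≤ c ^ β * φ s := by
  obtain ⟨D, hD⟩ := hφ.deriv_bound
  exact le_rpow_mul_of_logDeriv_le one_pos (fun x hx => hφ.pos hx) (fun x hx => (hD x hx).1)
    (fun x hx => (hD x hx).2.2) hc hs

end IsAdmissible

theorem neg_div_mul_one_sub_le {x q₀ : ℝ} (hx : x < 0) (hq₀ : 0 < q₀) :
    -x / (q₀ * (1 - x)) ≤ 1 / q₀ := by
  rw [div_le_div_iff₀ (by nlinarith) hq₀]
  nlinarith

/-- For an admissible `φ` with upper exponent `β`, any `x ∈ ℝ` and `q₀ ≥ 1`: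
if `x ≥ 0` then `inf_{q ≥ q₀} φ(q) e^{−x/q} ≤ φ(q₀) e^{−x/q₀}`, and if `x < 0` then
`inf_{q ≥ q₀} φ(q) e^{−x/q} ≤ q₀^β e^{1/q₀} φ(1 − x)`. -/
theorem stmt3 (φ : ℝ → ℝ) (γ β : ℝ) (hφ : IsAdmissible φ γ β)
    (x q₀ : ℝ) (hq₀ : 1 ≤ q₀) :
    (0 ≤ x →
      sInf {z : ℝ | ∃ q : ℝ, q₀ ≤ q ∧ z = φ q * Real.exp (-x / q)} ≤
        φ q₀ * Real.exp (-x / q₀)) ∧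
    (x < 0 →
      sInf {z : ℝ | ∃ q : ℝ, q₀ ≤ q ∧ z = φ q * Real.exp (-x / q)} ≤
        q₀ ^ β * Real.exp (1 / q₀) * φ (1 - x)) := by
  have hbdd : BddBelow {z : ℝ | ∃ q : ℝ, q₀ ≤ q ∧ z = φ q * Real.exp (-x / q)} := by
    refine ⟨0, ?_⟩
    rintro _ ⟨q, hq, rfl⟩
    exact mul_nonneg (hφ.pos (hq₀.trans hq)).le (Real.exp_pos _).le
  refine ⟨fun _ => csInf_le hbdd ⟨q₀, le_rfl, rfl⟩, fun hx => ?_⟩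
  have h1x : 1 ≤ 1 - x := by linarith
  have hq : q₀ ≤ q₀ * (1 - x) := le_mul_of_one_le_right (by linarith) h1x
  refine csInf_le_of_le hbdd ⟨q₀ * (1 - x), hq, rfl⟩ ?_
  calc φ (q₀ * (1 - x)) * Real.exp (-x / (q₀ * (1 - x)))
      ≤ (q₀ ^ β * φ (1 - x)) * Real.exp (1 / q₀) :=
        mul_le_mul (hφ.map_mul_le hq₀ h1x)
          (Real.exp_le_exp.2 (neg_div_mul_one_sub_le hx (by linarith))) (Real.exp_pos _).le
          (mul_nonneg (Real.rpow_nonneg (by linarith) β) (hφ.pos h1x).le)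
    _ = q₀ ^ β * Real.exp (1 / q₀) * φ (1 - x) := by ring
end

section
/- Let m ∈ ℕ, γ > 0 and β₁, …, β_m ≥ 0. Then the function φ(x) = x^γ ∏_{k=1}^m (log_k x)^{β_k}, defined for x ≥ 1, is admissible, where log₁ x = 1 + log⁺ x and log_k x = log₁(log_{k−1} x) for k > 1. -/
open MeasureTheory Set ENNReal

/-! On `[1, ∞)` the iterated logarithms satisfy `logk (n + 1) = 1 + log ∘ logk n`, so
`log φ = γ log x + ∑ βₖ log (logk k x)`. Each `logk n` is concave, being a monotone concave
function of a concave one, hence so is `log φ`. The chain rule gives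
`(logk n)' = ∏_{j < n} (logk j)⁻¹`: one factor `x⁻¹` times factors in `(0, 1]`. Hence
`(log φ)' = γ / x + ∑ βₖ (logk (k + 1))'` lies between `γ / x` and `(γ + ∑ βₖ) / x`. -/

theorem ConcaveOn.log {s : Set ℝ} {f : ℝ → ℝ} (hf : ConcaveOn ℝ s f)
    (hpos : ∀ x ∈ s, 0 < f x) : ConcaveOn ℝ s fun x => Real.log (f x) := by
  refine ⟨hf.1, fun x hx y hy a b ha hb hab => ?_⟩
  calc a • Real.log (f x) + b • Real.log (f y)
      ≤ Real.log (a • f x + b • f y) :=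
        strictConcaveOn_log_Ioi.concaveOn.2 (hpos x hx) (hpos y hy) ha hb hab
    _ ≤ Real.log (f (a • x + b • y)) :=
        Real.log_le_log ((convex_Ioi (0 : ℝ)) (hpos x hx) (hpos y hy) ha hb hab)
          (hf.2 hx hy ha hb hab)

theorem ConcaveOn.finset_sum {ι : Type*} {s : Set ℝ} {t : Finset ι} {f : ι → ℝ → ℝ}
    (hs : Convex ℝ s) (hf : ∀ i ∈ t, ConcaveOn ℝ s (f i)) :
    ConcaveOn ℝ s fun x => ∑ i ∈ t, f i x := by
  classical
  induction t using Finset.induction_on with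
  | empty => simpa using concaveOn_const 0 hs
  | insert i t hi ih =>
    simp only [Finset.sum_insert hi]
    exact (hf i (Finset.mem_insert_self i t)).add
      (ih fun j hj => hf j (Finset.mem_insert_of_mem hj))

theorem IsAdmissible.of_hasDerivWithinAt_log {φ L : ℝ → ℝ} {γ β : ℝ} (hγ : 0 < γ)
    (hβ : 0 < β) (h_one : φ 1 = 1) (h_ge_one : ∀ x, 1 ≤ x → 1 ≤ φ x)
    (h_concave : ConcaveOn ℝ (Set.Ici 1) fun x => Real.log (φ x))
    (h_deriv : ∀ x, 1 ≤ x → HasDerivWithinAt (fun x => Real.log (φ x)) (L x) (Set.Ici 1) x)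
    (h_bound : ∀ x, 1 ≤ x → γ / x ≤ L x ∧ L x ≤ β / x) : IsAdmissible φ γ β := by
  have hpos : ∀ x, 1 ≤ x → 0 < φ x := fun x hx => one_pos.trans_le (h_ge_one x hx)
  have h_exp_log : Set.EqOn (fun x => Real.exp (Real.log (φ x))) φ (Set.Ici 1) :=
    fun x hx => Real.exp_log (hpos x hx)
  refine ⟨h_one, h_ge_one, ?_, hγ, hβ, ⟨fun x => φ x * L x, fun x hx => ?_⟩⟩
  · intro x y θ hx hy hθ₀ hθ₁
    simpa only [smul_eq_mul] using h_concave.2 (Set.mem_Ici.2 hx) (Set.mem_Ici.2 hy) hθ₀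
      (sub_nonneg.2 hθ₁) (add_sub_cancel θ 1)
  · have hφL : φ x * L x / φ x = L x := mul_div_cancel_left₀ _ (hpos x hx).ne'
    refine ⟨?_, hφL ▸ h_bound x hx⟩
    have := ((h_deriv x hx).exp).congr_of_mem (fun y hy => (h_exp_log hy).symm) hx
    simpa only [Real.exp_log (hpos x hx)] using this

theorem one_le_logk (n : ℕ) {x : ℝ} (hx : 1 ≤ x) : 1 ≤ logk n x := by
  cases n with
  | zero => exact hx
  | succ n => exact le_add_of_nonneg_right (le_max_right _ _)

theorem logk_succ_of_one_le (n : ℕ) {x : ℝ} (hx : 1 ≤ x) :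
    logk (n + 1) x = 1 + Real.log (logk n x) :=
  congrArg (1 + ·) (max_eq_left (Real.log_nonneg (one_le_logk n hx)))

theorem logk_one (n : ℕ) : logk n 1 = 1 := by
  induction n with
  | zero => rfl
  | succ n ih => rw [logk_succ_of_one_le n le_rfl, ih, Real.log_one, add_zero]

theorem concaveOn_logk (n : ℕ) : ConcaveOn ℝ (Set.Ici 1) (logk n) := by
  induction n with
  | zero => exact concaveOn_id (convex_Ici 1)
  | succ n ih =>
    refine ((ih.log fun x hx => one_pos.trans_le (one_le_logk n hx)).add_const 1).congr ?_
    intro x hx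
    exact ((logk_succ_of_one_le n hx).trans (add_comm _ _)).symm

noncomputable def logkDeriv (n : ℕ) (x : ℝ) : ℝ :=
  ∏ j ∈ Finset.range n, (logk j x)⁻¹

theorem hasDerivWithinAt_logk (n : ℕ) {x : ℝ} (hx : 1 ≤ x) :
    HasDerivWithinAt (logk n) (logkDeriv n x) (Set.Ici 1) x := by
  induction n with
  | zero =>
    rw [logkDeriv, Finset.prod_range_zero]
    exact hasDerivWithinAt_id x (Set.Ici 1)
  | succ n ih =>
    have hlog := ((Real.hasDerivAt_log (one_pos.trans_le (one_le_logk n hx)).ne')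
      |>.comp_hasDerivWithinAt x ih).const_add 1
    rw [logkDeriv, Finset.prod_range_succ, mul_comm]
    exact hlog.congr (fun y hy => logk_succ_of_one_le n hy) (logk_succ_of_one_le n hx)

theorem logkDeriv_nonneg (n : ℕ) {x : ℝ} (hx : 1 ≤ x) : 0 ≤ logkDeriv n x :=
  Finset.prod_nonneg fun j _ => inv_nonneg.2 (zero_le_one.trans (one_le_logk j hx))

theorem logkDeriv_succ_le (n : ℕ) {x : ℝ} (hx : 1 ≤ x) : logkDeriv (n + 1) x ≤ x⁻¹ := by
  rw [logkDeriv, Finset.prod_range_succ']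
  refine mul_le_of_le_one_left (inv_nonneg.2 (zero_le_one.trans hx)) ?_
  exact Finset.prod_le_one (fun j _ => inv_nonneg.2 (zero_le_one.trans (one_le_logk _ hx)))
    fun j _ => inv_le_one_of_one_le₀ (one_le_logk _ hx)

theorem hasDerivWithinAt_log_logk (n : ℕ) {x : ℝ} (hx : 1 ≤ x) :
    HasDerivWithinAt (fun y => Real.log (logk n y)) (logkDeriv (n + 1) x) (Set.Ici 1) x := by
  have h := (hasDerivWithinAt_logk (n + 1) hx).sub_const 1
  refine h.congr (fun y hy => ?_) ?_
  · rw [logk_succ_of_one_le n hy, add_sub_cancel_left]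
  · rw [logk_succ_of_one_le n hx, add_sub_cancel_left]

noncomputable def logWeight (m : ℕ) (γ : ℝ) (β : ℕ → ℝ) (x : ℝ) : ℝ :=
  x ^ γ * ∏ k ∈ Finset.Icc 1 m, logk k x ^ β k

section logWeight

variable (m : ℕ) {γ : ℝ} {β : ℕ → ℝ}

theorem logWeight_one : logWeight m γ β 1 = 1 := by
  simp [logWeight, logk_one]

theorem one_le_logWeight (hγ : 0 ≤ γ) (hβ : ∀ k, 0 ≤ β k) {x : ℝ} (hx : 1 ≤ x) :
    1 ≤ logWeight m γ β x :=
  one_le_mul_of_one_le_of_one_le (Real.one_le_rpow hx hγ)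
    (Finset.one_le_prod fun k _ => Real.one_le_rpow (one_le_logk k hx) (hβ k))

theorem log_logWeight {x : ℝ} (hx : 1 ≤ x) :
    Real.log (logWeight m γ β x) =
      γ * Real.log x + ∑ k ∈ Finset.Icc 1 m, β k * Real.log (logk k x) := by
  have hfac : ∀ k ∈ Finset.Icc 1 m, logk k x ^ β k ≠ 0 := fun k _ =>
    (Real.rpow_pos_of_pos (one_pos.trans_le (one_le_logk k hx)) _).ne'
  have hx₀ : 0 < x := one_pos.trans_le hx
  rw [logWeight, Real.log_mul (Real.rpow_pos_of_pos hx₀ γ).ne' (Finset.prod_ne_zero_iff.2 hfac),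
    Real.log_rpow hx₀, Real.log_prod hfac]
  refine congrArg _ (Finset.sum_congr rfl fun k _ => ?_)
  exact Real.log_rpow (one_pos.trans_le (one_le_logk k hx)) _

theorem concaveOn_log_logWeight (hγ : 0 ≤ γ) (hβ : ∀ k, 0 ≤ β k) :
    ConcaveOn ℝ (Set.Ici 1) fun x => Real.log (logWeight m γ β x) := by
  have hlog : ∀ k, ConcaveOn ℝ (Set.Ici 1) fun x => Real.log (logk k x) := fun k =>
    (concaveOn_logk k).log fun x hx => one_pos.trans_le (one_le_logk k hx)
  have hsum := ConcaveOn.finset_sum (t := Finset.Icc 1 m) (convex_Ici 1) fun k _ =>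
    (hlog k).smul (hβ k)
  refine (((hlog 0).smul hγ).add hsum).congr fun x hx => ?_
  rw [log_logWeight m hx]
  rfl

theorem hasDerivWithinAt_log_logWeight {x : ℝ} (hx : 1 ≤ x) :
    HasDerivWithinAt (fun y => Real.log (logWeight m γ β y))
      (γ * x⁻¹ + ∑ k ∈ Finset.Icc 1 m, β k * logkDeriv (k + 1) x) (Set.Ici 1) x := by
  have hsum := HasDerivWithinAt.fun_sum (u := Finset.Icc 1 m) fun k _ =>
    (hasDerivWithinAt_log_logk k hx).const_mul (β k)
  have h := ((Real.hasDerivAt_log (one_pos.trans_le hx).ne').hasDerivWithinAt.const_mul γ).add hsum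
  exact h.congr (fun y hy => log_logWeight m hy) (log_logWeight m hx)

theorem isAdmissible_logWeight (hγ : 0 < γ) (hβ : ∀ k, 0 ≤ β k) :
    IsAdmissible (logWeight m γ β) γ (γ + ∑ k ∈ Finset.Icc 1 m, β k) := by
  refine .of_hasDerivWithinAt_log hγ
    (add_pos_of_pos_of_nonneg hγ (Finset.sum_nonneg fun k _ => hβ k)) (logWeight_one m)
    (fun x => one_le_logWeight m hγ.le hβ) (concaveOn_log_logWeight m hγ.le hβ)
    (fun x => hasDerivWithinAt_log_logWeight m) fun x hx => ⟨?_, ?_⟩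
  · have : 0 ≤ ∑ k ∈ Finset.Icc 1 m, β k * logkDeriv (k + 1) x :=
      Finset.sum_nonneg fun k _ => mul_nonneg (hβ k) (logkDeriv_nonneg _ hx)
    rw [div_eq_mul_inv]
    linarith
  · have : ∑ k ∈ Finset.Icc 1 m, β k * logkDeriv (k + 1) x ≤
        (∑ k ∈ Finset.Icc 1 m, β k) * x⁻¹ := by
      rw [Finset.sum_mul]
      exact Finset.sum_le_sum fun k _ =>
        mul_le_mul_of_nonneg_left (logkDeriv_succ_le k hx) (hβ k)
    rw [div_eq_mul_inv, add_mul]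
    linarith

end logWeight

/-- For `m ∈ ℕ`, `γ > 0` and `β₁, …, β_m ≥ 0`, the function
`φ(x) = x^γ ∏_{k=1}^m (log_k x)^{β_k}` is admissible. -/
theorem stmt7 (m : ℕ) (γ : ℝ) (hγ : 0 < γ) (βv : ℕ → ℝ) (hβv : ∀ k, 0 ≤ βv k) :
    ∃ γ' β' : ℝ, IsAdmissible
      (fun x : ℝ => x ^ γ * ∏ k ∈ Finset.Icc 1 m, (logk k x) ^ (βv k)) γ' β' :=
  ⟨γ, _, isAdmissible_logWeight m hγ hβv⟩
end
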